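/- arXiv:1504.03473 — 3 statements merged into one kernel-verified Lean document; each statement's English description precedes it below -/
import Mathlib

section
/- Let p, q be states of MIAs with p ⊑ q (MIA-refinement), where p is input-enabled. For every suspension trace σ ∈ (I ∪ O ∪ {δ_must})*, if p after_must σ is nonempty, then for every q' ∈ q after_must σ there exists p' ∈ p after_must σ with p' ⊑ q'. -/
/-- A path through a labeled step relation. -/
def TrPath {S L : Type} (step : S → L → S → Prop) : S → List L → S → Prop
  | p, [], q => q = p
  | p, a :: σ, q => ∃ r, step p a r ∧ TrPath step r σ q

/-- A Modal Interface Automaton over states `S`, actions `A`, with inputs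
identified by the predicate `inp` (outputs are the non-inputs). -/
structure MIA (S A : Type) (inp : A → Prop) where
  must : S → A → S → Prop
  may : S → A → S → Prop
  consistent : ∀ p a q, must p a q → may p a q
  inputDet : ∀ p a q q', inp a → must p a q → must p a q' → q = q'
  mayInpMust : ∀ p a q, inp a → may p a q → must p a q

namespace MIA

variable {S A : Type} {inp : A → Prop}

def initMust (M : MIA S A inp) (p : S) : Set A := {a | ∃ q, M.must p a q}

def initMay (M : MIA S A inp) (p : S) : Set A := {a | ∃ q, M.may p a q}

/-- may-quiescence δ_may : `init_must(p) ⊆ I`. -/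
def qMay (M : MIA S A inp) (p : S) : Prop := M.initMust p ⊆ {a | inp a}

/-- must-quiescence δ_must : `init_may(p) ⊆ I`. -/
def qMust (M : MIA S A inp) (p : S) : Prop := M.initMay p ⊆ {a | inp a}

/-- may-transitions extended with δ-self-loops at may-quiescent states
    (δ is encoded as `none`). -/
def mayStep (M : MIA S A inp) (p : S) (x : Option A) (q : S) : Prop :=
  match x with
  | some a => M.may p a q
  | none => q = p ∧ M.qMay p

/-- must-transitions extended with δ-self-loops at must-quiescent states. -/
def mustStep (M : MIA S A inp) (p : S) (x : Option A) (q : S) : Prop :=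
  match x with
  | some a => M.must p a q
  | none => q = p ∧ M.qMust p

def afterMay (M : MIA S A inp) (p : S) (σ : List (Option A)) : Set S :=
  {q | TrPath M.mayStep p σ q}

def afterMust (M : MIA S A inp) (p : S) (σ : List (Option A)) : Set S :=
  {q | TrPath M.mustStep p σ q}

def StracesMay (M : MIA S A inp) (p : S) : Set (List (Option A)) :=
  {σ | ∃ q, TrPath M.mayStep p σ q}

def StracesMust (M : MIA S A inp) (p : S) : Set (List (Option A)) :=
  {σ | ∃ q, TrPath M.mustStep p σ q}

/-- `Out_may(P)`: may-enabled outputs of states in `P`, plus `δ` (= `none`)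
    if some state of `P` is may-quiescent. -/
def OutMay (M : MIA S A inp) (P : Set S) : Set (Option A) :=
  {x | (∃ a, x = some a ∧ ¬ inp a ∧ ∃ p ∈ P, ∃ q, M.may p a q) ∨
       (x = none ∧ ∃ p ∈ P, M.qMay p)}

def OutMust (M : MIA S A inp) (P : Set S) : Set (Option A) :=
  {x | (∃ a, x = some a ∧ ¬ inp a ∧ ∃ p ∈ P, ∃ q, M.must p a q) ∨
       (x = none ∧ ∃ p ∈ P, M.qMust p)}

/-- Every state has a must-transition for every input. -/
def inputEnabled (M : MIA S A inp) : Prop := ∀ p a, inp a → ∃ q, M.must p a q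

end MIA

/-- MIA-refinement (alternating simulation), stated for raw transition
    relations so that it also applies to IOLTS viewed as MIAs. -/
def IsRefinement {S T A : Type} (inp : A → Prop)
    (must₁ may₁ : S → A → S → Prop) (must₂ may₂ : T → A → T → Prop)
    (R : S → T → Prop) : Prop :=
  ∀ p q, R p q →
    (∀ a q', must₂ q a q' → ∃ p', must₁ p a p' ∧ R p' q') ∧
    (∀ a p', ¬ inp a → may₁ p a p' → ∃ q', may₂ q a q' ∧ R p' q')

/-- `p ⊑ q` : `p` MIA-refines `q`. -/
def MIARef {S T A : Type} {inp : A → Prop} (M : MIA S A inp) (N : MIA T A inp)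
    (p : S) (q : T) : Prop :=
  ∃ R, IsRefinement inp M.must M.may N.must N.may R ∧ R p q

/-- `p ≤_var q` : the IOLTS `(T, I, O, tr)` state `p` is a variant of the MIA
    state `q`; the IOLTS is viewed as the MIA with must = may = tr, and its
    transition relation is contained in the may-relation of `N`. -/
def Variant {T A : Type} {inp : A → Prop} (tr : T → A → T → Prop)
    (N : MIA T A inp) (p q : T) : Prop :=
  (∃ R, IsRefinement inp tr tr N.must N.may R ∧ R p q) ∧
  ∀ s a t, tr s a t → N.may s a t

section IOLTS

variable {S T A : Type}

/-- quiescence of an IOLTS state: only inputs enabled. -/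
def ltsQuiescent (inp : A → Prop) (tr : S → A → S → Prop) (p : S) : Prop :=
  ∀ a q, tr p a q → inp a

/-- IOLTS transitions extended with δ-self-loops at quiescent states. -/
def ltsStep (inp : A → Prop) (tr : S → A → S → Prop)
    (p : S) (x : Option A) (q : S) : Prop :=
  match x with
  | some a => tr p a q
  | none => q = p ∧ ltsQuiescent inp tr p

def ltsAfter (inp : A → Prop) (tr : S → A → S → Prop) (p : S)
    (σ : List (Option A)) : Set S :=
  {q | TrPath (ltsStep inp tr) p σ q}

def ltsStraces (inp : A → Prop) (tr : S → A → S → Prop) (p : S) :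
    Set (List (Option A)) :=
  {σ | ∃ q, TrPath (ltsStep inp tr) p σ q}

def ltsOut (inp : A → Prop) (tr : S → A → S → Prop) (P : Set S) :
    Set (Option A) :=
  {x | (∃ a, x = some a ∧ ¬ inp a ∧ ∃ p ∈ P, ∃ q, tr p a q) ∨
       (x = none ∧ ∃ p ∈ P, ltsQuiescent inp tr p)}

/-- classical input/output conformance between IOLTS states. -/
def ioco (inp : A → Prop) (tri : S → A → S → Prop) (trs : T → A → T → Prop)
    (i : S) (s : T) : Prop :=
  ∀ σ ∈ ltsStraces inp trs s,
    ltsOut inp tri (ltsAfter inp tri i σ) ⊆ ltsOut inp trs (ltsAfter inp trs s σ)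

end IOLTS

/-- modal input/output conformance. -/
def mioco {S T A : Type} {inp : A → Prop} (M : MIA S A inp) (N : MIA T A inp)
    (i : S) (s : T) : Prop :=
  (∀ σ ∈ N.StracesMay s, M.OutMay (M.afterMay i σ) ⊆ N.OutMay (N.afterMay s σ)) ∧
  (∀ σ ∈ M.StracesMust i, N.OutMust (N.afterMust s σ) ⊆ M.OutMust (M.afterMust i σ))

theorem TrPath.exists_of_simulation {S T L : Type} {step₁ : S → L → S → Prop}
    {step₂ : T → L → T → Prop} {R : S → T → Prop}
    (hsim : ∀ p q x q', R p q → step₂ q x q' → ∃ p', step₁ p x p' ∧ R p' q') :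
    ∀ (σ : List L) (p : S) (q q' : T), R p q → TrPath step₂ q σ q' →
      ∃ p', TrPath step₁ p σ p' ∧ R p' q'
  | [], p, _, _, hpq, rfl => ⟨p, rfl, hpq⟩
  | _ :: σ, p, q, q', hpq, ⟨r, hqr, hrq'⟩ => by
    obtain ⟨s, hps, hsr⟩ := hsim p q _ r hpq hqr
    obtain ⟨p', hsp', hp'q'⟩ := exists_of_simulation hsim σ s r q' hsr hrq'
    exact ⟨p', ⟨s, hps, hsp'⟩, hp'q'⟩

namespace IsRefinement

variable {S T A : Type} {inp : A → Prop} {M : MIA S A inp} {N : MIA T A inp}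
  {R : S → T → Prop}

/-- An output may-step of `p` would be matched by an output may-step of `q`. -/
theorem qMust_of_qMust (hR : IsRefinement inp M.must M.may N.must N.may R) {p : S} {q : T}
    (hpq : R p q) (hq : N.qMust q) : M.qMust p := by
  rintro a ⟨p', hpp'⟩
  by_contra hout
  obtain ⟨q', hqq', -⟩ := (hR p q hpq).2 a p' hout hpp'
  exact hout (hq ⟨q', hqq'⟩)

theorem exists_mustStep (hR : IsRefinement inp M.must M.may N.must N.may R) {p : S} {q : T}
    {x : Option A} {q' : T} (hpq : R p q) (hqq' : N.mustStep q x q') :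
    ∃ p', M.mustStep p x p' ∧ R p' q' := by
  cases x with
  | some a => exact (hR p q hpq).1 a q' hqq'
  | none =>
    obtain ⟨rfl, hq⟩ := hqq'
    exact ⟨p, ⟨rfl, hR.qMust_of_qMust hpq hq⟩, hpq⟩

end IsRefinement

theorem stmt7_general {S T A : Type} {inp : A → Prop} (M : MIA S A inp)
    (N : MIA T A inp) (p : S) (q : T) (h : MIARef M N p q)
    (σ : List (Option A)) :
    ∀ q' ∈ N.afterMust q σ, ∃ p' ∈ M.afterMust p σ, MIARef M N p' q' := by
  obtain ⟨R, hR, hpq⟩ := h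
  intro q' hq'
  obtain ⟨p', hp', hp'q'⟩ :=
    TrPath.exists_of_simulation (fun _ _ _ _ => hR.exists_mustStep) σ p q q' hpq hq'
  exact ⟨p', hp', R, hR, hp'q'⟩

/-- if `p ⊑ q` with `p` input-enabled, then for every suspension
trace `σ`, whenever `p after_must σ ≠ ∅`, every `q' ∈ q after_must σ` has
some `p' ∈ p after_must σ` with `p' ⊑ q'`. -/
theorem stmt7 {S T A : Type} {inp : A → Prop} (M : MIA S A inp)
    (N : MIA T A inp) (p : S) (q : T) (h : MIARef M N p q)
    (hie : M.inputEnabled)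
    (σ : List (Option A)) (hne : (M.afterMust p σ).Nonempty) :
    ∀ q' ∈ N.afterMust q σ, ∃ p' ∈ M.afterMust p σ, MIARef M N p' q' :=
  stmt7_general M N p q h σ
end

section
/- MIA-refinement preserves modal I/O-conformance: let s, i be states of MIAs over common I, O, with i input-enabled, and suppose i mioco s. Then for every i' with i' ⊑ i (MIA-refinement), i' mioco s. -/
/-!
A refinement relation `R ∋ (i', i)` lets `i` replay every may-path of `i'` (outputs and `δ`
by the may-clause, inputs because `i` enables them and `i'` is input-deterministic), and lets
`i'` replay every must-path of `i`. Hence `Out_may` can only shrink from `i` to `i'` and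
`Out_must` can only grow, which transfers both clauses of `i mioco s` to `i'`. For the
must-clause one also needs every must-trace of `s` to be a must-trace of `i`; this follows by
induction from the must-clause of `i mioco s` itself, inputs being enabled in `i`.
-/

namespace TrPath

variable {S L : Type} {step : S → L → S → Prop}

theorem append {σ τ : List L} {p q : S} :
    TrPath step p (σ ++ τ) q ↔ ∃ r, TrPath step p σ r ∧ TrPath step r τ q := by
  induction σ generalizing p with
  | nil => simp [TrPath]
  | cons x σ ih =>
    simp only [List.cons_append, TrPath, ih]
    constructor
    · rintro ⟨r, hpr, s, hrs, hsq⟩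
      exact ⟨s, ⟨r, hpr, hrs⟩, hsq⟩
    · rintro ⟨s, ⟨r, hpr, hrs⟩, hsq⟩
      exact ⟨r, hpr, s, hrs, hsq⟩

theorem append_singleton {σ : List L} {x : L} {p q : S} :
    TrPath step p (σ ++ [x]) q ↔ ∃ r, TrPath step p σ r ∧ step r x q := by
  simp [append, TrPath]

theorem exists_of_simulation_s9 {T : Type} {step' : T → L → T → Prop} {R : S → T → Prop}
    (hsim : ∀ p q x p', R p q → step p x p' → ∃ q', step' q x q' ∧ R p' q')
    {σ : List L} {p p' : S} {q : T} (hpq : R p q) (hp : TrPath step p σ p') :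
    ∃ q', TrPath step' q σ q' ∧ R p' q' := by
  induction σ generalizing p q with
  | nil => exact ⟨q, rfl, hp ▸ hpq⟩
  | cons x σ ih =>
    obtain ⟨r, hpr, hr⟩ := hp
    obtain ⟨r', hqr', hrr'⟩ := hsim p q x r hpq hpr
    obtain ⟨q', hr'q', hq'⟩ := ih hrr' hr
    exact ⟨q', ⟨r', hqr', hr'q'⟩, hq'⟩

end TrPath

namespace MIA

variable {S S' A : Type} {inp : A → Prop}

theorem mem_OutMay_iff {M : MIA S A inp} {P : Set S} {x : Option A} :
    x ∈ M.OutMay P ↔ (∀ a ∈ x, ¬ inp a) ∧ ∃ p ∈ P, ∃ q, M.mayStep p x q := by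
  cases x <;> simp [OutMay, mayStep]

theorem mem_OutMust_iff {M : MIA S A inp} {P : Set S} {x : Option A} :
    x ∈ M.OutMust P ↔ (∀ a ∈ x, ¬ inp a) ∧ ∃ p ∈ P, ∃ q, M.mustStep p x q := by
  cases x <;> simp [OutMust, mustStep]

section Refinement

variable {M' : MIA S' A inp} {M : MIA S A inp} {R : S' → S → Prop}

theorem qMay_of_refinement (hR : IsRefinement inp M'.must M'.may M.must M.may R)
    {p : S'} {q : S} (hpq : R p q) (hp : M'.qMay p) : M.qMay q := by
  rintro a ⟨q', hqq'⟩
  obtain ⟨p', hpp', -⟩ := (hR p q hpq).1 a q' hqq'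
  exact hp ⟨p', hpp'⟩

theorem qMust_of_refinement (hR : IsRefinement inp M'.must M'.may M.must M.may R)
    {p : S'} {q : S} (hpq : R p q) (hq : M.qMust q) : M'.qMust p := by
  rintro a ⟨p', hpp'⟩
  by_contra ha
  obtain ⟨q', hqq', -⟩ := (hR p q hpq).2 a p' ha hpp'
  exact ha (hq ⟨q', hqq'⟩)

theorem mayStep_simulation (hR : IsRefinement inp M'.must M'.may M.must M.may R)
    (hie : M.inputEnabled) {p p' : S'} {q : S} {x : Option A} (hpq : R p q)
    (hp : M'.mayStep p x p') : ∃ q', M.mayStep q x q' ∧ R p' q' := by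
  cases x with
  | none =>
    obtain ⟨rfl, hquiet⟩ := hp
    exact ⟨q, ⟨rfl, qMay_of_refinement hR hpq hquiet⟩, hpq⟩
  | some a =>
    by_cases ha : inp a
    · -- May-inputs of `M'` are must-inputs, so `p'` is the unique `a`-successor of `p`,
      -- namely the one simulating the (enabled) input step of `q`.
      obtain ⟨q', hqq'⟩ := hie q a ha
      obtain ⟨p'', hpp'', hp''q'⟩ := (hR p q hpq).1 a q' hqq'
      have : p'' = p' := M'.inputDet p a p'' p' ha hpp'' (M'.mayInpMust p a p' ha hp)
      exact ⟨q', M.consistent q a q' hqq', this ▸ hp''q'⟩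
    · exact (hR p q hpq).2 a p' ha hp

theorem mustStep_simulation (hR : IsRefinement inp M'.must M'.may M.must M.may R)
    {p : S'} {q q' : S} {x : Option A} (hpq : R p q)
    (hq : M.mustStep q x q') : ∃ p', M'.mustStep p x p' ∧ R p' q' := by
  cases x with
  | none =>
    obtain ⟨rfl, hquiet⟩ := hq
    exact ⟨p, ⟨rfl, qMust_of_refinement hR hpq hquiet⟩, hpq⟩
  | some a => exact (hR p q hpq).1 a q' hq

end Refinement

theorem StracesMust_subset_of_OutMust_subset {T : Type} {M : MIA S A inp} {N : MIA T A inp}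
    {i : S} {s : T} (hie : M.inputEnabled)
    (h : ∀ σ ∈ M.StracesMust i, N.OutMust (N.afterMust s σ) ⊆ M.OutMust (M.afterMust i σ)) :
    N.StracesMust s ⊆ M.StracesMust i := by
  intro σ
  induction σ using List.reverseRecOn with
  | nil => exact fun _ => ⟨i, rfl⟩
  | append_singleton σ x ih =>
    rintro ⟨t', ht'⟩
    obtain ⟨t, ht, htt'⟩ := TrPath.append_singleton.mp ht'
    have hσ : σ ∈ M.StracesMust i := ih ⟨t, ht⟩
    by_cases hx : ∀ a ∈ x, ¬ inp a
    · obtain ⟨-, q, hq, q', hqq'⟩ :=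
        mem_OutMust_iff.mp (h σ hσ (mem_OutMust_iff.mpr ⟨hx, t, ht, t', htt'⟩))
      exact ⟨q', TrPath.append_singleton.mpr ⟨q, hq, hqq'⟩⟩
    · obtain ⟨a, rfl, ha⟩ : ∃ a, x = some a ∧ inp a := by simpa using hx
      obtain ⟨q, hq⟩ := hσ
      obtain ⟨q', hqq'⟩ := hie q a ha
      exact ⟨q', TrPath.append_singleton.mpr ⟨q, hq, hqq'⟩⟩

end MIA

namespace MIARef

variable {S S' A : Type} {inp : A → Prop} {M' : MIA S' A inp} {M : MIA S A inp}
  {i' : S'} {i : S}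

theorem OutMay_afterMay_subset (hi : MIARef M' M i' i) (hie : M.inputEnabled)
    (σ : List (Option A)) : M'.OutMay (M'.afterMay i' σ) ⊆ M.OutMay (M.afterMay i σ) := by
  obtain ⟨R, hR, hi'i⟩ := hi
  simp only [Set.subset_def, MIA.mem_OutMay_iff]
  rintro x ⟨hx, p, hp, p', hpp'⟩
  obtain ⟨q, hq, hpq⟩ :=
    TrPath.exists_of_simulation_s9 (fun _ _ _ _ => MIA.mayStep_simulation hR hie) hi'i hp
  obtain ⟨q', hqq', -⟩ := MIA.mayStep_simulation hR hie hpq hpp'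
  exact ⟨hx, q, hq, q', hqq'⟩

theorem OutMust_afterMust_subset (hi : MIARef M' M i' i) (σ : List (Option A)) :
    M.OutMust (M.afterMust i σ) ⊆ M'.OutMust (M'.afterMust i' σ) := by
  obtain ⟨R, hR, hi'i⟩ := hi
  simp only [Set.subset_def, MIA.mem_OutMust_iff]
  rintro x ⟨hx, q, hq, q', hqq'⟩
  obtain ⟨p, hp, hpq⟩ := TrPath.exists_of_simulation_s9 (step := M.mustStep)
    (step' := M'.mustStep) (R := flip R) (fun _ _ _ _ => MIA.mustStep_simulation hR) hi'i hq
  obtain ⟨p', hpp', -⟩ := MIA.mustStep_simulation hR hpq hqq'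
  exact ⟨hx, p, hp, p', hpp'⟩

end MIARef

/-- MIA-refinement preserves modal I/O-conformance: if `i` is
input-enabled and `i mioco s`, then every `i' ⊑ i` satisfies `i' mioco s`. -/
theorem stmt9 {S S' T A : Type} {inp : A → Prop} (M : MIA S A inp)
    (M' : MIA S' A inp) (N : MIA T A inp) (i : S) (s : T)
    (hie : M.inputEnabled) (h : mioco M N i s) :
    ∀ i' : S', MIARef M' M i' i → mioco M' N i' s := by
  intro i' hi'
  refine ⟨fun σ hσ => (hi'.OutMay_afterMay_subset hie σ).trans (h.1 σ hσ), fun σ _ x hx => ?_⟩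
  have hσ : σ ∈ N.StracesMust s := by
    obtain ⟨-, t, ht, -⟩ := MIA.mem_OutMust_iff.mp hx
    exact ⟨t, ht⟩
  exact hi'.OutMust_afterMust_subset σ
    (h.2 σ (MIA.StracesMust_subset_of_OutMust_subset hie h.2 hσ) hx)
end

section
/- Completeness fails without the refinement assumption: there exist MIAs i and s over the same alphabets (with i input-enabled after angelic completion, or with empty input alphabet) such that every IOLTS variant i' ≤_var i satisfies i' ioco T(s), yet i mioco s does not hold. Concretely, take I = ∅, O = {a, b}, s with initial state having must-transitions on both !a and !b to distinct terminal states, and i identical except the !b-transition is only a may-transition (not must). -/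
/-!
A variant of `i` must keep the must-transition `!a` at the root and may keep or drop `!b`.
Either way its transitions are among those of `s`, and it is quiescent only at the two
terminal states, where `s` is quiescent too; so its suspension traces, the states reached
and their outputs are all among those of `s`, which is `ioco`. But at the must-trace `ε`
the specification `s` must offer `!b`, which `i` merely may: the second clause of `mioco`
fails.
-/

theorem TrPath.mono {S L : Type} {step₁ step₂ : S → L → S → Prop}
    (h : ∀ p x q, step₁ p x q → step₂ p x q) :
    ∀ {σ : List L} {p q : S}, TrPath step₁ p σ q → TrPath step₂ p σ q
  | [], _, _, hpq => hpq
  | _ :: _, _, _, ⟨r, hr, hrq⟩ => ⟨r, h _ _ _ hr, TrPath.mono h hrq⟩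

section IOLTS

variable {S A : Type} {inp : A → Prop} {tr₁ tr₂ : S → A → S → Prop}

theorem ltsStep_mono (htr : ∀ p a q, tr₁ p a q → tr₂ p a q)
    (hδ : ∀ p, ltsQuiescent inp tr₁ p → ltsQuiescent inp tr₂ p) :
    ∀ p x q, ltsStep inp tr₁ p x q → ltsStep inp tr₂ p x q
  | _, some _, _, h => htr _ _ _ h
  | _, none, _, h => ⟨h.1, hδ _ h.2⟩

theorem ioco_self_of_le (htr : ∀ p a q, tr₁ p a q → tr₂ p a q)
    (hδ : ∀ p, ltsQuiescent inp tr₁ p → ltsQuiescent inp tr₂ p) (p : S) :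
    ioco inp tr₁ tr₂ p p := by
  intro σ _ x hx
  have hafter : ∀ {q}, q ∈ ltsAfter inp tr₁ p σ → q ∈ ltsAfter inp tr₂ p σ :=
    TrPath.mono (ltsStep_mono htr hδ)
  rcases hx with ⟨a, rfl, ha, q, hq, r, hr⟩ | ⟨rfl, q, hq, hδq⟩
  · exact Or.inl ⟨a, rfl, ha, q, hafter hq, r, htr _ _ _ hr⟩
  · exact Or.inr ⟨rfl, q, hafter hq, hδ q hδq⟩

end IOLTS

namespace BranchExample

/-! States `0, 1, 2`; the output `false` plays `!a` and `true` plays `!b`. -/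

abbrev noInputs : Bool → Prop := fun _ => False

def mayTr : Fin 3 → Bool → Fin 3 → Prop :=
  fun p x q => p = 0 ∧ ((x = false ∧ q = 1) ∨ (x = true ∧ q = 2))

def mustTr : Fin 3 → Bool → Fin 3 → Prop :=
  fun p x q => p = 0 ∧ x = false ∧ q = 1

def impl : MIA (Fin 3) Bool noInputs where
  must := mustTr
  may := mayTr
  consistent := fun _ _ _ ⟨hp, hx, hq⟩ => ⟨hp, Or.inl ⟨hx, hq⟩⟩
  inputDet := fun _ _ _ _ h _ _ => h.elim
  mayInpMust := fun _ _ _ h _ => h.elim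

def spec : MIA (Fin 3) Bool noInputs where
  must := mayTr
  may := mayTr
  consistent := fun _ _ _ h => h
  inputDet := fun _ _ _ _ h _ _ => h.elim
  mayInpMust := fun _ _ _ h _ => h.elim

theorem variant_impl_root {tr : Fin 3 → Bool → Fin 3 → Prop} {i' : Fin 3}
    (h : Variant tr impl i' 0) : i' = 0 ∧ tr 0 false 1 := by
  obtain ⟨⟨R, hR, hi'⟩, hmay⟩ := h
  obtain ⟨p, hp, -⟩ := (hR i' 0 hi').1 false 1 ⟨rfl, rfl, rfl⟩
  obtain ⟨rfl, ⟨-, rfl⟩ | ⟨hfalse, -⟩⟩ := hmay i' false p hp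
  · exact ⟨rfl, hp⟩
  · exact absurd hfalse Bool.false_ne_true

theorem ltsQuiescent_mayTr {tr : Fin 3 → Bool → Fin 3 → Prop} (h01 : tr 0 false 1)
    {p : Fin 3} (hp : ltsQuiescent noInputs tr p) : ltsQuiescent noInputs mayTr p := by
  rintro x q ⟨rfl, -⟩
  exact hp false 1 h01

theorem ioco_spec_of_variant {tr : Fin 3 → Bool → Fin 3 → Prop} {i' : Fin 3}
    (h : Variant tr impl i' 0) : ioco noInputs tr spec.may i' 0 := by
  obtain ⟨rfl, h01⟩ := variant_impl_root h
  exact ioco_self_of_le h.2 (fun _ => ltsQuiescent_mayTr h01) 0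

theorem not_mioco_impl_spec : ¬ mioco impl spec 0 0 := by
  rintro ⟨-, hmust⟩
  have hb : some true ∈ spec.OutMust (spec.afterMust 0 []) :=
    Or.inl ⟨true, rfl, not_false, 0, rfl, 2, rfl, Or.inr ⟨rfl, rfl⟩⟩
  rcases hmust [] ⟨0, rfl⟩ hb with ⟨a, ha, -, -, -, -, -, hfalse, -⟩ | ⟨hnone, -⟩
  · cases Option.some.inj ha
    cases hfalse
  · cases hnone

end BranchExample

/-- completeness fails without the refinement assumption: there
exist MIAs `i` and `s` over the same alphabets (here with empty input
alphabet, hence trivially input-enabled) such that every IOLTS variant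
`i' ≤_var i` satisfies `i' ioco T(s)`, yet `i mioco s` does not hold. -/
theorem stmt16 :
    ∃ (S A : Type) (inp : A → Prop) (M N : MIA S A inp) (i s : S),
      (∀ a, ¬ inp a) ∧ M.inputEnabled ∧
      (∀ (tr : S → A → S → Prop) (i' : S),
        Variant tr M i' i → ioco inp tr N.may i' s) ∧
      ¬ mioco M N i s :=
  ⟨Fin 3, Bool, BranchExample.noInputs, BranchExample.impl, BranchExample.spec, 0, 0,
    fun _ h => h, fun _ _ h => h.elim,
    fun _ _ => BranchExample.ioco_spec_of_variant, BranchExample.not_mioco_impl_spec⟩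
end
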